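/- arXiv:2206.07386 — 2 statements merged into one kernel-verified Lean document; each statement's English description precedes it below -/
import Mathlib

section
/- Define the augmented score $\psi(Z, \theta, \gamma, \alpha) = m(W,\gamma) + \alpha(W)(Y - \gamma(W)) - \theta$ where $Z = (Y, W)$. If $\gamma_0(W) = E_P[Y \mid W]$, $\alpha_0$ is the Riesz representer of the linear mean-square continuous functional $\gamma \mapsto E_P[m(W,\gamma)]$ on $\Gamma$, and $\theta_0 = E_P[m(W,\gamma_0)]$, then the Gateaux derivative of $r \mapsto E_P[\psi(Z, \theta_0, \gamma_0 + r(\gamma - \gamma_0), \alpha_0)]$ at $r = 0$ equals $0$ for every $\gamma \in \Gamma$. -/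
open MeasureTheory

/-! Along the line `γ₀ + r • (γ - γ₀)` the score is affine in `r`, with slope
`m(W, γ - γ₀) - α₀(W) (γ - γ₀)(W)`, whose mean vanishes by the Riesz representer property.
So the expected score is constant in `r`. -/

section AffineIntegral

variable {α E : Type*} [MeasurableSpace α] {μ : Measure α}
  [NormedAddCommGroup E] [NormedSpace ℝ E] {f g : α → E}

theorem integral_add_smul_eq_of_integral_eq_zero (hg : Integrable g μ)
    (hg₀ : ∫ x, g x ∂μ = 0) (r : ℝ) :
    ∫ x, (f x + r • g x) ∂μ = ∫ x, f x ∂μ := by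
  have hrg : Integrable (fun x => r • g x) μ := hg.smul r
  by_cases hf : Integrable f μ
  · rw [integral_add hf hrg, integral_smul, hg₀, smul_zero, add_zero]
  · rw [integral_undef hf, integral_undef]
    rwa [integrable_add_iff_integrable_left' hrg]

theorem hasDerivAt_integral_add_smul_of_integral_eq_zero (hg : Integrable g μ)
    (hg₀ : ∫ x, g x ∂μ = 0) (r₀ : ℝ) :
    HasDerivAt (fun r : ℝ => ∫ x, (f x + r • g x) ∂μ) 0 r₀ := by
  simp only [integral_add_smul_eq_of_integral_eq_zero hg hg₀]
  exact hasDerivAt_const r₀ _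

end AffineIntegral

theorem neyman_orthogonality_gamma_general
    {𝓦 : Type*} [MeasurableSpace 𝓦] (P : Measure (ℝ × 𝓦))
    (Γ : Submodule ℝ (𝓦 → ℝ)) (m : 𝓦 → (𝓦 → ℝ) → ℝ) (γ₀ α₀ : 𝓦 → ℝ) (θ₀ : ℝ)
    (hγ₀Γ : γ₀ ∈ Γ)
    (hΓL2 : ∀ γ ∈ Γ, MemLp (fun z : ℝ × 𝓦 => γ z.2) 2 P)
    (hα₀ : MemLp (fun z : ℝ × 𝓦 => α₀ z.2) 2 P)
    (hmInt : ∀ γ ∈ Γ, Integrable (fun z : ℝ × 𝓦 => m z.2 γ) P)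
    (hadd : ∀ γ₁ ∈ Γ, ∀ γ₂ ∈ Γ, ∀ w, m w (γ₁ + γ₂) = m w γ₁ + m w γ₂)
    (hsmul : ∀ c : ℝ, ∀ γ ∈ Γ, ∀ w, m w (c • γ) = c * m w γ)
    -- Riesz representer property of α₀ on Γ
    (hriesz : ∀ γ ∈ Γ, ∫ z, m z.2 γ ∂P = ∫ z, α₀ z.2 * γ z.2 ∂P) :
    ∀ γ ∈ Γ,
      HasDerivAt
        (fun r : ℝ =>
          ∫ z, (m z.2 (γ₀ + r • (γ - γ₀)) +
              α₀ z.2 * (z.1 - (γ₀ + r • (γ - γ₀)) z.2) - θ₀) ∂P)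
        0 0 := by
  intro γ hγ
  set δ := γ - γ₀
  have hδ : δ ∈ Γ := Γ.sub_mem hγ hγ₀Γ
  have hαδ : Integrable (fun z : ℝ × 𝓦 => α₀ z.2 * δ z.2) P := hα₀.integrable_mul (hΓL2 δ hδ)
  have hslope : ∫ z, (m z.2 δ - α₀ z.2 * δ z.2) ∂P = 0 := by
    rw [integral_sub (hmInt δ hδ) hαδ, hriesz δ hδ, sub_self]
  have hscore : ∀ (r : ℝ) (z : ℝ × 𝓦),
      m z.2 (γ₀ + r • δ) + α₀ z.2 * (z.1 - (γ₀ + r • δ) z.2) - θ₀ =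
        (m z.2 γ₀ + α₀ z.2 * (z.1 - γ₀ z.2) - θ₀) + r • (m z.2 δ - α₀ z.2 * δ z.2) := by
    intro r z
    rw [hadd γ₀ hγ₀Γ (r • δ) (Γ.smul_mem r hδ), hsmul r δ hδ]
    simp only [Pi.add_apply, Pi.smul_apply, smul_eq_mul]
    ring
  simp only [hscore]
  exact hasDerivAt_integral_add_smul_of_integral_eq_zero ((hmInt δ hδ).sub hαδ) hslope 0

/-- **Neyman orthogonality with respect to the regression function `γ`.**
With `Z = (Y, W) ∼ P`, the augmented score
`ψ(Z,θ,γ,α) = m(W,γ) + α(W)(Y - γ(W)) - θ` has zero Gateaux derivative in the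
direction `γ - γ₀` at `(θ₀, γ₀, α₀)`, where `γ₀(W) = E_P[Y ∣ W]`, `α₀` is the
Riesz representer of `γ ↦ E_P[m(W,γ)]` on `Γ`, and `θ₀ = E_P[m(W,γ₀)]`. -/
theorem neyman_orthogonality_gamma
    {𝓦 : Type*} [MeasurableSpace 𝓦] (P : Measure (ℝ × 𝓦)) [IsProbabilityMeasure P]
    (Γ : Submodule ℝ (𝓦 → ℝ)) (m : 𝓦 → (𝓦 → ℝ) → ℝ) (γ₀ α₀ : 𝓦 → ℝ) (θ₀ : ℝ)
    (hγ₀Γ : γ₀ ∈ Γ)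
    (hY : MemLp (fun z : ℝ × 𝓦 => z.1) 2 P)
    (hΓL2 : ∀ γ ∈ Γ, MemLp (fun z : ℝ × 𝓦 => γ z.2) 2 P)
    (hα₀ : MemLp (fun z : ℝ × 𝓦 => α₀ z.2) 2 P)
    (hmInt : ∀ γ ∈ Γ, Integrable (fun z : ℝ × 𝓦 => m z.2 γ) P)
    (hadd : ∀ γ₁ ∈ Γ, ∀ γ₂ ∈ Γ, ∀ w, m w (γ₁ + γ₂) = m w γ₁ + m w γ₂)
    (hsmul : ∀ c : ℝ, ∀ γ ∈ Γ, ∀ w, m w (c • γ) = c * m w γ)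
    -- γ₀(W) is (a version of) the conditional expectation E_P[Y ∣ W]
    (hcond : P[(fun z : ℝ × 𝓦 => z.1) | MeasurableSpace.comap Prod.snd inferInstance]
        =ᵐ[P] fun z : ℝ × 𝓦 => γ₀ z.2)
    -- Riesz representer property of α₀ on Γ
    (hriesz : ∀ γ ∈ Γ, ∫ z, m z.2 γ ∂P = ∫ z, α₀ z.2 * γ z.2 ∂P)
    (hθ₀ : θ₀ = ∫ z, m z.2 γ₀ ∂P) :
    ∀ γ ∈ Γ,
      HasDerivAt
        (fun r : ℝ =>
          ∫ z, (m z.2 (γ₀ + r • (γ - γ₀)) +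
              α₀ z.2 * (z.1 - (γ₀ + r • (γ - γ₀)) z.2) - θ₀) ∂P)
        0 0 :=
  neyman_orthogonality_gamma_general P Γ m γ₀ α₀ θ₀ hγ₀Γ hΓL2 hα₀ hmInt hadd hsmul hriesz
end

section
/- (Double robustness identity) With $\psi(Z, \theta, \gamma, \alpha) = m(W,\gamma) + \alpha(W)(Y - \gamma(W)) - \theta$, $\gamma_0(W) = E_P[Y \mid W]$, $\alpha_0$ the Riesz representer of $\gamma \mapsto E_P[m(W,\gamma)]$ on $\Gamma$, and $\theta_0 = E_P[m(W,\gamma_0)]$, for every $\gamma, \alpha \in \Gamma$ we have $E_P[\psi(Z, \theta_0, \gamma, \alpha)] = -E_P[(\alpha(W) - \alpha_0(W))(\gamma(W) - \gamma_0(W))]$. In particular the augmented score has mean zero whenever $\gamma = \gamma_0$ (for any $\alpha$) or $\alpha = \alpha_0$ (for any $\gamma$). -/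
open MeasureTheory

/-!
Pointwise,
`m(γ) + α (Y - γ) - θ₀ = (m(γ) - α₀ γ) + α (Y - γ₀) + (α₀ γ₀ - θ₀) - (α - α₀)(γ - γ₀)`.
The first three terms have mean zero, by the Riesz property, the conditional expectation
property and the definition of `θ₀` respectively; all terms are integrable since products of
`L²` functions are integrable.
-/

theorem integral_add_mul_sub_sub_eq_neg_integral_mul_sub {Ω : Type*} [MeasurableSpace Ω]
    {μ : Measure Ω} [IsProbabilityMeasure μ]
    {M Y a a₀ g g₀ : Ω → ℝ} {θ : ℝ} (hM : Integrable M μ) (hY : MemLp Y 2 μ)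
    (ha : MemLp a 2 μ) (ha₀ : MemLp a₀ 2 μ) (hg : MemLp g 2 μ) (hg₀ : MemLp g₀ 2 μ)
    (hM_eq : ∫ ω, M ω ∂μ = ∫ ω, a₀ ω * g ω ∂μ)
    (horth : ∫ ω, a ω * (Y ω - g₀ ω) ∂μ = 0)
    (hθ : θ = ∫ ω, a₀ ω * g₀ ω ∂μ) :
    ∫ ω, (M ω + a ω * (Y ω - g ω) - θ) ∂μ =
      - ∫ ω, (a ω - a₀ ω) * (g ω - g₀ ω) ∂μ := by
  have hsplit : (fun ω => M ω + a ω * (Y ω - g ω) - θ) = fun ω =>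
      (M ω - a₀ ω * g ω) + a ω * (Y ω - g₀ ω) + (a₀ ω * g₀ ω - θ)
        - (a ω - a₀ ω) * (g ω - g₀ ω) := by
    funext ω; ring
  have ia₀g : Integrable (fun ω => a₀ ω * g ω) μ := ha₀.integrable_mul hg
  have ia₀g₀ : Integrable (fun ω => a₀ ω * g₀ ω) μ := ha₀.integrable_mul hg₀
  have iM : Integrable (fun ω => M ω - a₀ ω * g ω) μ := hM.sub ia₀g
  have iY : Integrable (fun ω => a ω * (Y ω - g₀ ω)) μ := ha.integrable_mul (hY.sub hg₀)
  have iθ : Integrable (fun ω => a₀ ω * g₀ ω - θ) μ := ia₀g₀.sub (integrable_const θ)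
  have ibias : Integrable (fun ω => (a ω - a₀ ω) * (g ω - g₀ ω)) μ :=
    (ha.sub ha₀).integrable_mul (hg.sub hg₀)
  have hM_zero : ∫ ω, (M ω - a₀ ω * g ω) ∂μ = 0 := by
    rw [integral_sub hM ia₀g, hM_eq, sub_self]
  have hθ_zero : ∫ ω, (a₀ ω * g₀ ω - θ) ∂μ = 0 := by
    rw [integral_sub ia₀g₀ (integrable_const θ), integral_const,
      probReal_univ, one_smul, hθ, sub_self]
  rw [hsplit, integral_sub (f := fun ω => _ + _ + _) ((iM.add iY).add iθ) ibias,
    integral_add (f := fun ω => _ + _) (iM.add iY) iθ, integral_add iM iY, hM_zero, horth,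
    hθ_zero]
  ring

theorem double_robustness_general
    {𝓦 : Type*} [MeasurableSpace 𝓦] (P : Measure (ℝ × 𝓦)) [IsProbabilityMeasure P]
    (Γ : Submodule ℝ (𝓦 → ℝ)) (m : 𝓦 → (𝓦 → ℝ) → ℝ) (γ₀ α₀ : 𝓦 → ℝ) (θ₀ : ℝ)
    (hγ₀Γ : γ₀ ∈ Γ) (hα₀Γ : α₀ ∈ Γ)
    (hY : MemLp (fun z : ℝ × 𝓦 => z.1) 2 P)
    (hΓL2 : ∀ γ ∈ Γ, MemLp (fun z : ℝ × 𝓦 => γ z.2) 2 P)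
    (hmInt : ∀ γ ∈ Γ, Integrable (fun z : ℝ × 𝓦 => m z.2 γ) P)
    -- conditional expectation property of γ₀: E_P[α(W)(Y - γ₀(W))] = 0 for all α ∈ L²
    (hcond : ∀ α : 𝓦 → ℝ, MemLp (fun z : ℝ × 𝓦 => α z.2) 2 P →
        ∫ z, α z.2 * (z.1 - γ₀ z.2) ∂P = 0)
    -- Riesz representer property of α₀ on Γ
    (hriesz : ∀ γ ∈ Γ, ∫ z, m z.2 γ ∂P = ∫ z, α₀ z.2 * γ z.2 ∂P)
    (hθ₀ : θ₀ = ∫ z, m z.2 γ₀ ∂P) :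
    ∀ γ ∈ Γ, ∀ α ∈ Γ,
      ∫ z, (m z.2 γ + α z.2 * (z.1 - γ z.2) - θ₀) ∂P =
        - ∫ z, (α z.2 - α₀ z.2) * (γ z.2 - γ₀ z.2) ∂P := by
  intro γ hγ α hα
  exact integral_add_mul_sub_sub_eq_neg_integral_mul_sub (hmInt γ hγ) hY (hΓL2 α hα)
    (hΓL2 α₀ hα₀Γ) (hΓL2 γ hγ) (hΓL2 γ₀ hγ₀Γ) (hriesz γ hγ) (hcond α (hΓL2 α hα))
    (hθ₀.trans (hriesz γ₀ hγ₀Γ))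

/-- **Double robustness identity.**
With `ψ(Z,θ,γ,α) = m(W,γ) + α(W)(Y - γ(W)) - θ`, `γ₀(W) = E_P[Y ∣ W]`
(expressed through the orthogonality property `E_P[α(W)(Y - γ₀(W))] = 0`),
`α₀` the Riesz representer of `γ ↦ E_P[m(W,γ)]` on `Γ`, and
`θ₀ = E_P[m(W,γ₀)]`, for every `γ, α ∈ Γ`:
`E_P[ψ(Z,θ₀,γ,α)] = -E_P[(α(W) - α₀(W))(γ(W) - γ₀(W))]`.
In particular the score has mean zero if `γ = γ₀` or `α = α₀`. -/
theorem double_robustness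
    {𝓦 : Type*} [MeasurableSpace 𝓦] (P : Measure (ℝ × 𝓦)) [IsProbabilityMeasure P]
    (Γ : Submodule ℝ (𝓦 → ℝ)) (m : 𝓦 → (𝓦 → ℝ) → ℝ) (γ₀ α₀ : 𝓦 → ℝ) (θ₀ : ℝ)
    (hγ₀Γ : γ₀ ∈ Γ) (hα₀Γ : α₀ ∈ Γ)
    (hY : MemLp (fun z : ℝ × 𝓦 => z.1) 2 P)
    (hΓL2 : ∀ γ ∈ Γ, MemLp (fun z : ℝ × 𝓦 => γ z.2) 2 P)
    (hmInt : ∀ γ ∈ Γ, Integrable (fun z : ℝ × 𝓦 => m z.2 γ) P)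
    (hadd : ∀ γ₁ ∈ Γ, ∀ γ₂ ∈ Γ, ∀ w, m w (γ₁ + γ₂) = m w γ₁ + m w γ₂)
    (hsmul : ∀ c : ℝ, ∀ γ ∈ Γ, ∀ w, m w (c • γ) = c * m w γ)
    -- conditional expectation property of γ₀: E_P[α(W)(Y - γ₀(W))] = 0 for all α ∈ L²
    (hcond : ∀ α : 𝓦 → ℝ, MemLp (fun z : ℝ × 𝓦 => α z.2) 2 P →
        ∫ z, α z.2 * (z.1 - γ₀ z.2) ∂P = 0)
    -- Riesz representer property of α₀ on Γ
    (hriesz : ∀ γ ∈ Γ, ∫ z, m z.2 γ ∂P = ∫ z, α₀ z.2 * γ z.2 ∂P)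
    (hθ₀ : θ₀ = ∫ z, m z.2 γ₀ ∂P) :
    ∀ γ ∈ Γ, ∀ α ∈ Γ,
      ∫ z, (m z.2 γ + α z.2 * (z.1 - γ z.2) - θ₀) ∂P =
        - ∫ z, (α z.2 - α₀ z.2) * (γ z.2 - γ₀ z.2) ∂P :=
  double_robustness_general P Γ m γ₀ α₀ θ₀ hγ₀Γ hα₀Γ hY hΓL2 hmInt hcond hriesz hθ₀
end
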